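/- Let sequences Y, Ŷ : ℕ → ℝ satisfy Y(0) = Ŷ(0) = 0 and for all T ≥ 1: Y(T) = (1-α)·Y(T-1) + α·Ŷ(T-1) + (1-α), and Ŷ(T) = (1/N)·Y(T-1) + ((N-1)/N)·Ŷ(T-1) + 1/N, where 0 < α < 1 and N ≥ 1. Then for all T ≥ 0: Y(T) - Ŷ(T) = ((1-α-1/N)/(α+1/N))·(1 - (1-α-1/N)^T) and (1/N)·Y(T) + α·Ŷ(T) = T/N. -/
import Mathlib

theorem recurrence_trigger_count (α N : ℝ) (hα0 : 0 < α) (hα1 : α < 1) (hN : 1 ≤ N)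
    (Y Yh : ℕ → ℝ) (hY0 : Y 0 = 0) (hYh0 : Yh 0 = 0)
    (hY : ∀ T : ℕ, 1 ≤ T → Y T = (1 - α) * Y (T - 1) + α * Yh (T - 1) + (1 - α))
    (hYh : ∀ T : ℕ, 1 ≤ T → Yh T = (1 / N) * Y (T - 1) + ((N - 1) / N) * Yh (T - 1) + 1 / N) :
    ∀ T : ℕ,
      Y T - Yh T = ((1 - α - 1 / N) / (α + 1 / N)) * (1 - (1 - α - 1 / N) ^ T) ∧
      (1 / N) * Y T + α * Yh T = T / N := by
  have hN0 : N ≠ 0 := by linarith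
  have hs : α + 1 / N ≠ 0 := by
    have : 0 < 1 / N := by positivity
    linarith
  intro T
  induction T with
  | zero => simp [hY0, hYh0]
  | succ n ih =>
    obtain ⟨ihd, ihs⟩ := ih
    have h1 := hY (n + 1) (by omega)
    have h2 := hYh (n + 1) (by omega)
    simp only [Nat.add_sub_cancel] at h1 h2
    constructor
    · have key : Y (n + 1) - Yh (n + 1) = (1 - α - 1 / N) * ((Y n - Yh n) + 1) := by
        rw [h1, h2]; field_simp; ring
      rw [key, ihd, pow_succ]
      field_simp
      ring
    · have key : (1 / N) * Y (n + 1) + α * Yh (n + 1)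
          = ((1 / N) * Y n + α * Yh n) + 1 / N := by
        rw [h1, h2]; field_simp; ring
      rw [key, ihs]
      push_cast
      field_simp
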